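/- Let s ∈ ℤ^ℕ be exponentially bounded, and let r¹ ≠ r² be two addresses in ℤ^ℕ whose itineraries with respect to s are defined and coincide. Then neither r¹ nor r² is fast. -/

import Mathlib

open Set Filter Topology OnePoint

noncomputable section

/-- The space of external addresses: integer sequences `s₀ s₁ s₂ …`. -/
abbrev Addr : Type := ℕ → ℤ

/-- The one-sided shift on external addresses. -/
def shift (s : Addr) : Addr := fun n => s (n + 1)

/-- The model map `𝓕(t, s) = (F(t) − 2π|s₁|, σ(s))`, where `F(t) = eᵗ − 1`. -/
def Fmodel : ℝ × Addr → ℝ × Addr :=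
  fun x => (Real.exp x.1 - 1 - 2 * Real.pi * |(x.2 1 : ℝ)|, shift x.2)

/-- The model Julia set `J(𝓕)`: points whose forward orbit stays in `[0,∞) × ℤ^ℕ`. -/
def JF : Set (ℝ × Addr) := {x | ∀ n : ℕ, 0 ≤ (Fmodel^[n] x).1}

/-- The model escaping set `I(𝓕)`. -/
def IF : Set (ℝ × Addr) :=
  {x | x ∈ JF ∧ Tendsto (fun n => (Fmodel^[n] x).1) atTop atTop}

/-- An address `s` is exponentially bounded if `(t, s) ∈ J(𝓕)` for some `t`. -/
def ExpBounded (s : Addr) : Prop := ∃ t : ℝ, (t, s) ∈ JF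

/-- The minimal potential `t_s = min {t ≥ 0 : (t, s) ∈ J(𝓕)}` of an address `s`. -/
def tmin (s : Addr) : ℝ := sInf {t | (t, s) ∈ JF}

/-- An exponentially bounded address `s` is fast if the endpoint `(t_s, s)` escapes. -/
def Fast (s : Addr) : Prop := ExpBounded s ∧ (tmin s, s) ∈ IF

/-- The set `Ẽ(𝓕)` of escaping endpoints of the model: the points `(t_s, s)` for fast `s`. -/
def escEndF : Set (ℝ × Addr) := {x | ∃ s : Addr, Fast s ∧ x = (tmin s, s)}

/-- The inverse `F⁻¹(t) = log(1 + t)` of `F(t) = eᵗ − 1`. -/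
def Finv (t : ℝ) : ℝ := Real.log (1 + t)

/-- Strict lexicographic order on external addresses. -/
def lexLt (a b : Addr) : Prop := ∃ n : ℕ, (∀ m : ℕ, m < n → a m = b m) ∧ a n < b n

/-- Prepend an integer entry to an address: `m·s = m s₀ s₁ s₂ …`. -/
def consAddr (m : ℤ) (s : Addr) : Addr := fun n => match n with
  | 0 => m
  | Nat.succ k => s k

/-- The itinerary of `r` with respect to `s` is defined and equals `m`:
`m_j·s < σʲ(r) < (m_j + 1)·s` in lexicographic order for all `j ≥ 0`. -/
def HasItinerary (s r m : Addr) : Prop :=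
  ∀ j : ℕ, lexLt (consAddr (m j) s) (shift^[j] r) ∧ lexLt (shift^[j] r) (consAddr (m j + 1) s)

/-!
Where two addresses with the same itinerary first differ, their entries are `m_j` and `m_j + 1`,
so their next tails lie lexicographically on both sides of `s`. While they keep agreeing, the
tails straddle the successive shifts of `s`, and they never become equal. Hence the entries of
`r¹` stay within `1` of those of `s` along shifts of `s` that restart at `s` infinitely often.
Comparing with the orbit of a point `(t, s) ∈ J(𝓕)` gives `(t + K, σ^q r¹) ∈ J(𝓕)` at every
restart `q`, for a constant `K`. If `r¹` were fast, then `T(𝓕^q(t_{r¹}, r¹)) > t + K` at some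
restart, and pulling `(t + K, σ^q r¹)` back along the orbit yields a point of `J(𝓕)` over `r¹`
with potential below `t_{r¹}`.
-/

lemma iterate_shift_apply (r : Addr) (j n : ℕ) : shift^[j] r n = r (n + j) := by
  induction j generalizing r with
  | zero => rfl
  | succ j ih => exact ih (shift r)

lemma eq_of_head_eq_of_shift_eq {a b : Addr} (h0 : a 0 = b 0) (h : shift a = shift b) :
    a = b := by
  funext n
  cases n with
  | zero => exact h0
  | succ n => exact congrFun h n

section Lex

variable {a b c : Addr}

lemma lexLt.asymm (h : lexLt a b) : ¬ lexLt b a := by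
  rintro ⟨n', hn', hlt'⟩
  obtain ⟨n, hn, hlt⟩ := h
  rcases lt_trichotomy n n' with hc | rfl | hc
  · exact hlt.ne (hn' n hc).symm
  · exact (hlt.trans hlt').false
  · exact hlt'.ne (hn n' hc).symm

lemma lexLt.head_le (h : lexLt a b) : a 0 ≤ b 0 := by
  obtain ⟨n, hn, hlt⟩ := h
  cases n with
  | zero => exact hlt.le
  | succ n => exact (hn 0 n.succ_pos).le

lemma lexLt.shift_of_head_eq (h : lexLt a b) (h0 : a 0 = b 0) : lexLt (shift a) (shift b) := by
  obtain ⟨n, hn, hlt⟩ := h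
  cases n with
  | zero => exact absurd h0 hlt.ne
  | succ n => exact ⟨n, fun i hi => hn (i + 1) (by omega), hlt⟩

def LexBetween (c a b : Addr) : Prop :=
  (lexLt a c ∧ lexLt c b) ∨ (lexLt b c ∧ lexLt c a)

lemma LexBetween.symm (h : LexBetween c a b) : LexBetween c b a := Or.symm h

lemma LexBetween.ne (h : LexBetween c a b) : a ≠ b := by
  rintro rfl
  rcases h with ⟨h, h'⟩ | ⟨h, h'⟩ <;> exact h.asymm h'

lemma LexBetween.shift_of_head_eq (h : LexBetween c a b) (h0 : a 0 = b 0) :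
    LexBetween (shift c) (shift a) (shift b) := by
  rcases h with ⟨hac, hcb⟩ | ⟨hbc, hca⟩
  · have := hac.head_le; have := hcb.head_le
    exact Or.inl ⟨hac.shift_of_head_eq (by omega), hcb.shift_of_head_eq (by omega)⟩
  · have := hbc.head_le; have := hca.head_le
    exact Or.inr ⟨hbc.shift_of_head_eq (by omega), hca.shift_of_head_eq (by omega)⟩

end Lex

section Itinerary

variable {s a b m : Addr}

lemma hasItinerary_shift (h : HasItinerary s a m) : HasItinerary s (shift a) (shift m) :=
  fun j => h (j + 1)

lemma hasItinerary_iterate_shift (h : HasItinerary s a m) (n : ℕ) :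
    HasItinerary s (shift^[n] a) (shift^[n] m) := by
  induction n generalizing a m with
  | zero => exact h
  | succ n ih => exact ih (hasItinerary_shift h)

lemma head_mem_Icc_of_hasItinerary (h : HasItinerary s a m) : a 0 ∈ Set.Icc (m 0) (m 0 + 1) :=
  ⟨(h 0).1.head_le, (h 0).2.head_le⟩

lemma lexBetween_shift_of_head_lt (ha : HasItinerary s a m) (hb : HasItinerary s b m)
    (hlt : a 0 < b 0) : LexBetween s (shift a) (shift b) := by
  obtain ⟨ha₁, ha₂⟩ := head_mem_Icc_of_hasItinerary ha
  obtain ⟨hb₁, hb₂⟩ := head_mem_Icc_of_hasItinerary hb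
  exact Or.inr ⟨(hb 0).2.shift_of_head_eq (show b 0 = m 0 + 1 by omega),
    (ha 0).1.shift_of_head_eq (show m 0 = a 0 by omega)⟩

lemma lexBetween_shift_of_head_ne (ha : HasItinerary s a m) (hb : HasItinerary s b m)
    (hne : a 0 ≠ b 0) : LexBetween s (shift a) (shift b) := by
  rcases hne.lt_or_gt with hlt | hlt
  · exact lexBetween_shift_of_head_lt ha hb hlt
  · exact (lexBetween_shift_of_head_lt hb ha hlt).symm

lemma iterate_shift_ne (ha : HasItinerary s a m) (hb : HasItinerary s b m) (hne : a ≠ b)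
    (n : ℕ) : shift^[n] a ≠ shift^[n] b := by
  induction n generalizing a b m with
  | zero => exact hne
  | succ n ih =>
    refine ih (hasItinerary_shift ha) (hasItinerary_shift hb) fun h => ?_
    by_cases h0 : a 0 = b 0
    · exact hne (eq_of_head_eq_of_shift_eq h0 h)
    · exact (lexBetween_shift_of_head_ne ha hb h0).ne h

lemma frequently_lexBetween_iterate_shift (ha : HasItinerary s a m) (hb : HasItinerary s b m)
    (hne : a ≠ b) : ∃ᶠ q in atTop, LexBetween s (shift^[q] a) (shift^[q] b) := by
  refine frequently_atTop.2 fun N => ?_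
  obtain ⟨n, hn⟩ := Function.ne_iff.1 (iterate_shift_ne ha hb hne N)
  have hn' : shift^[n] (shift^[N] a) 0 ≠ shift^[n] (shift^[N] b) 0 := by
    simpa only [iterate_shift_apply, zero_add] using hn
  have key := lexBetween_shift_of_head_ne
    (hasItinerary_iterate_shift (hasItinerary_iterate_shift ha N) n)
    (hasItinerary_iterate_shift (hasItinerary_iterate_shift hb N) n) hn'
  have hiter (x : Addr) : shift (shift^[n] (shift^[N] x)) = shift^[n + N + 1] x := by
    rw [← Function.iterate_add_apply, ← Function.iterate_succ_apply' shift]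
  exact ⟨n + N + 1, by omega, by simpa only [hiter] using key⟩

def Straddled (s a c : Addr) : Prop :=
  ∃ b m, HasItinerary s a m ∧ HasItinerary s b m ∧ LexBetween c a b

lemma Straddled.abs_head_le {c : Addr} (h : Straddled s a c) : |a 0| ≤ |c 0| + 1 := by
  obtain ⟨b, m, ha, hb, hc⟩ := h
  obtain ⟨ha₁, ha₂⟩ := head_mem_Icc_of_hasItinerary ha
  obtain ⟨hb₁, hb₂⟩ := head_mem_Icc_of_hasItinerary hb
  have hac : |a 0 - c 0| ≤ 1 := by
    rcases hc with ⟨h₁, h₂⟩ | ⟨h₁, h₂⟩ <;>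
      · have := h₁.head_le; have := h₂.head_le
        rw [abs_le]; constructor <;> omega
  linarith [abs_sub_abs_le_abs_sub (a 0) (c 0)]

lemma Straddled.step {c : Addr} (h : Straddled s a c) :
    Straddled s (shift a) (shift c) ∨ Straddled s (shift a) s := by
  obtain ⟨b, m, ha, hb, hc⟩ := h
  by_cases h0 : a 0 = b 0
  · exact Or.inl ⟨_, _, hasItinerary_shift ha, hasItinerary_shift hb, hc.shift_of_head_eq h0⟩
  · exact Or.inr ⟨_, _, hasItinerary_shift ha, hasItinerary_shift hb,
      lexBetween_shift_of_head_ne ha hb h0⟩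

end Itinerary

lemma mem_JF_iff {x : ℝ × Addr} : x ∈ JF ↔ 0 ≤ x.1 ∧ Fmodel x ∈ JF :=
  ⟨fun h => ⟨h 0, fun n => h (n + 1)⟩, fun ⟨h0, h⟩ n => n.casesOn h0 h⟩

lemma tmin_le {t : ℝ} {r : Addr} (h : (t, r) ∈ JF) : tmin r ≤ t :=
  csInf_le ⟨0, fun _ ht => (mem_JF_iff.1 ht).1⟩ h

lemma exists_lt_mem_JF_of_lt_Fmodel {t u : ℝ} {r : Addr} (hu : (u, shift r) ∈ JF)
    (hlt : u < (Fmodel (t, r)).1) : ∃ w < t, (w, r) ∈ JF := by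
  have hu0 : 0 ≤ u := (mem_JF_iff.1 hu).1
  have hv : 0 ≤ u + 2 * Real.pi * |(r 1 : ℝ)| := by positivity
  have hpos : 0 < 1 + (u + 2 * Real.pi * |(r 1 : ℝ)|) := by linarith
  have hF : Fmodel (Finv (u + 2 * Real.pi * |(r 1 : ℝ)|), r) = (u, shift r) :=
    Prod.ext (by simp only [Fmodel, Finv, Real.exp_log hpos]; ring) rfl
  refine ⟨Finv (u + 2 * Real.pi * |(r 1 : ℝ)|), ?_, mem_JF_iff.2 ⟨?_, hF ▸ hu⟩⟩
  · rw [Finv, Real.log_lt_iff_lt_exp hpos]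
    simp only [Fmodel] at hlt
    linarith
  · exact Real.log_nonneg (by linarith)

lemma exists_lt_mem_JF_of_lt_iterate_Fmodel (q : ℕ) {t u : ℝ} {r : Addr}
    (hu : (u, shift^[q] r) ∈ JF) (hlt : u < (Fmodel^[q] (t, r)).1) :
    ∃ w < t, (w, r) ∈ JF := by
  induction q generalizing t r with
  | zero => exact ⟨u, hlt, hu⟩
  | succ q ih =>
    obtain ⟨w, hw, hwJ⟩ := ih hu hlt
    exact exists_lt_mem_JF_of_lt_Fmodel hwJ hw

lemma exists_add_le_exp_sub_one (c : ℝ) : ∃ K, 0 ≤ K ∧ K + c ≤ Real.exp K - 1 := by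
  refine ⟨|c| + 2, by positivity, ?_⟩
  nlinarith [Real.quadratic_le_exp_of_nonneg (by positivity : 0 ≤ |c| + 2), le_abs_self c,
    abs_nonneg c]

lemma mem_JF_of_dominated {x₀ : ℝ × Addr} (hx₀ : x₀ ∈ JF) {K : ℝ} (hK0 : 0 ≤ K)
    (hK : K + (x₀.1 + 2 * Real.pi * |(x₀.2 0 : ℝ)| + 2 * Real.pi) ≤ Real.exp K - 1)
    {R : Addr → ℝ × Addr → Prop} (head : ∀ a y, R a y → |a 0| ≤ |y.2 0| + 1)
    (step : ∀ a y, R a y → R (shift a) (Fmodel y) ∨ R (shift a) x₀)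
    {a : Addr} (ha : R a x₀) : (x₀.1 + K, a) ∈ JF := by
  have ht₀ := (mem_JF_iff.1 hx₀).1
  have hK' : K + 2 * Real.pi ≤ Real.exp K - 1 := by
    have : (0 : ℝ) ≤ 2 * Real.pi * |(x₀.2 0 : ℝ)| := by positivity
    linarith
  have h2π : (0 : ℝ) ≤ 2 * Real.pi := by positivity
  -- The potential of `(t, a)` stays `K` above that of the orbit point `y` that `a` is compared
  -- with: `hK` pays for a restart at `x₀`, and `hK'` together with `exp y.1 ≥ 1` for an advance.
  suffices ∀ n a y t, y ∈ JF → R a y → y.1 + K ≤ t → 0 ≤ (Fmodel^[n] (t, a)).1 from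
    fun n => this n a x₀ _ hx₀ ha le_rfl
  intro n
  induction n with
  | zero => intro a y t hy _ ht; exact (add_nonneg (mem_JF_iff.1 hy).1 hK0).trans ht
  | succ n ih =>
    intro a y t hy hR ht
    obtain ⟨hy0, hFy⟩ := mem_JF_iff.1 hy
    have hexp : Real.exp y.1 * Real.exp K ≤ Real.exp t := by
      rw [← Real.exp_add]; exact Real.exp_le_exp.2 ht
    have hy1 : 1 ≤ Real.exp y.1 := Real.one_le_exp hy0
    rcases step a y hR with hR' | hR'
    · refine ih _ _ _ hFy hR' ?_
      have h1 : |a 1| ≤ |y.2 1| + 1 := head _ _ hR'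
      have h1' : |(a 1 : ℝ)| ≤ |(y.2 1 : ℝ)| + 1 := by exact_mod_cast h1
      simp only [Fmodel]
      nlinarith [mul_le_mul_of_nonneg_left h1' h2π,
        mul_nonneg (sub_nonneg.2 hy1) (sub_nonneg.2 (Real.one_le_exp hK0))]
    · refine ih _ _ _ hx₀ hR' ?_
      have h1 : |(a 1 : ℝ)| ≤ |(x₀.2 0 : ℝ)| + 1 := by exact_mod_cast head _ _ hR'
      have : Real.exp K ≤ Real.exp t := Real.exp_le_exp.2 (by linarith)
      nlinarith [mul_le_mul_of_nonneg_left h1 h2π]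

lemma not_fast_of_hasItinerary {s a b m : Addr} (hs : ExpBounded s) (hne : a ≠ b)
    (ha : HasItinerary s a m) (hb : HasItinerary s b m) : ¬ Fast a := by
  rintro ⟨-, haJ, hesc⟩
  obtain ⟨t₀, hs⟩ := hs
  obtain ⟨K, hK0, hK⟩ :=
    exists_add_le_exp_sub_one (t₀ + 2 * Real.pi * |(s 0 : ℝ)| + 2 * Real.pi)
  obtain ⟨q, hq, hlt⟩ := ((frequently_lexBetween_iterate_shift ha hb hne).and_eventually
    (hesc.eventually_gt_atTop (t₀ + K))).exists
  have hdom : (t₀ + K, shift^[q] a) ∈ JF :=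
    mem_JF_of_dominated (R := fun a y => Straddled s a y.2) hs hK0 hK
      (fun _ _ h => h.abs_head_le) (fun _ _ h => h.step)
      ⟨_, _, hasItinerary_iterate_shift ha q, hasItinerary_iterate_shift hb q, hq⟩
  obtain ⟨w, hw, hwJ⟩ := exists_lt_mem_JF_of_lt_iterate_Fmodel q hdom hlt
  exact (tmin_le hwJ).not_gt hw

/-- **Addresses sharing an itinerary are slow.** If `s` is exponentially bounded and
`r¹ ≠ r²` have itineraries with respect to `s` that are defined and coincide, then neither
`r¹` nor `r²` is fast. -/
theorem addresses_sharing_itinerary_are_slow (s : Addr) (hs : ExpBounded s)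
    (r1 r2 : Addr) (hne : r1 ≠ r2) (m : Addr)
    (h1 : HasItinerary s r1 m) (h2 : HasItinerary s r2 m) :
    ¬ Fast r1 ∧ ¬ Fast r2 :=
  ⟨not_fast_of_hasItinerary hs hne h1 h2, not_fast_of_hasItinerary hs hne.symm h2 h1⟩

end
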